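/- Let S be a numerical semigroup of type t. If I is an almost canonical relative ideal of S, then t(I) ≤ t + 1. Moreover, for each 1 ≤ i ≤ t + 1 there are exactly C(t, i−1) almost canonical relative ideals of S with Frobenius number F(S) and type i; in particular, there are exactly 2^t almost canonical relative ideals of S with Frobenius number F(S). -/

import Mathlib

open Set Pointwise

def IsNumSgrp (S : Set ℤ) : Prop :=
  0 ∈ S ∧ (∀ a ∈ S, ∀ b ∈ S, a + b ∈ S) ∧ (∀ a ∈ S, 0 ≤ a) ∧ ∃ c : ℤ, ∀ z, c ≤ z → z ∈ S

def maxId (S : Set ℤ) : Set ℤ := S \ {0}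

def subI (I J : Set ℤ) : Set ℤ := {x : ℤ | ∀ j ∈ J, x + j ∈ I}

def PF (S I : Set ℤ) : Set ℤ := subI I (maxId S) \ I

def stdK (S : Set ℤ) (F : ℤ) : Set ℤ := {x : ℤ | 0 ≤ x ∧ F - x ∉ S}

def IsFrobOf (I : Set ℤ) (FI : ℤ) : Prop := FI ∉ I ∧ ∀ z : ℤ, FI < z → z ∈ I

def IsRelIdeal (S I : Set ℤ) : Prop :=
  I.Nonempty ∧ (∀ i ∈ I, ∀ s ∈ S, i + s ∈ I) ∧ ∃ z ∈ S, ∀ i ∈ I, z + i ∈ S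

def tilde (I : Set ℤ) (d : ℤ) : Set ℤ := (fun x => x + d) '' I

def IsAlmostCanonical (S : Set ℤ) (F : ℤ) (I : Set ℤ) : Prop :=
  ∃ FI : ℤ, IsFrobOf I FI ∧ subI (tilde I (F - FI)) (maxId S) = stdK S F ∪ {F}

def IsMinGen (S : Set ℤ) (x : ℤ) : Prop := x ∈ maxId S \ (maxId S + maxId S)

def IsMult (S : Set ℤ) (e : ℤ) : Prop := e ∈ maxId S ∧ ∀ m ∈ maxId S, e ≤ m

def genK (S : Set ℤ) (F : ℤ) : Set ℤ := (AddSubmonoid.closure (stdK S F) : Set ℤ)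

def nK (K : Set ℤ) : ℕ → Set ℤ
  | 0 => {0}
  | 1 => K
  | n + 2 => nK K (n + 1) + K

def IsGAS (S : Set ℤ) (F : ℤ) : Prop :=
  stdK S F + stdK S F = stdK S F ∨
  ∃ X : Finset ℤ, (∀ x ∈ X, IsMinGen S x) ∧ (∀ x ∈ X, ∀ y ∈ X, x - y ∉ PF S S) ∧
    (stdK S F + stdK S F) \ stdK S F = (fun x => F - x) '' (X : Set ℤ) ∪ {F}

def IsAlmostSym (S : Set ℤ) (F : ℤ) : Prop := subI S (maxId S) = stdK S F ∪ {F}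

def apery (I : Set ℤ) (e : ℤ) : Set ℤ := {i ∈ I | i - e ∉ I}

/-!
Write `M` for the maximal ideal and `K` for the canonical ideal. For a relative ideal `J` with
`M + K ⊆ J ⊆ K` one has `J - M = K ∪ {F}`, so `PF(J) = (K \ J) ∪ {F}`; conversely every almost
canonical ideal with Frobenius number `F` lies between `M + K` and `K`, and the translate `Ĩ` of
any almost canonical ideal contains `M + K`. The gap `K \ (M + K)` is `F - PF(S)`, of size `t`.
Hence the ideals in question are the sets `K \ U` for `U ⊆ K \ (M + K)`, of type `|U| + 1`.
-/

namespace Set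
variable {α : Type*} {A B : Set α}

theorem bijOn_sdiff_Icc_powerset (hAB : A ⊆ B) : BijOn (B \ ·) (Icc A B) (𝒫 (B \ A)) := by
  refine ⟨fun I hI => sdiff_subset_sdiff_right hI.1, fun I hI J hJ hIJ => ?_, fun U hU => ?_⟩
  · rw [← sdiff_sdiff_cancel_left hI.2, ← sdiff_sdiff_cancel_left hJ.2]
    exact congrArg (B \ ·) hIJ
  · refine ⟨B \ U, ⟨?_, sdiff_subset⟩, sdiff_sdiff_cancel_left (hU.trans sdiff_subset)⟩
    exact fun a ha => ⟨hAB ha, fun hU' => (hU hU').2 ha⟩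

theorem ncard_Icc_eq_two_pow (hAB : A ⊆ B) (hfin : (B \ A).Finite) :
    (Icc A B).ncard = 2 ^ (B \ A).ncard := by
  rw [← ncard_powerset _ hfin, ← (bijOn_sdiff_Icc_powerset hAB).image_eq,
    (bijOn_sdiff_Icc_powerset hAB).injOn.ncard_image]

theorem ncard_setOf_mem_Icc_ncard_sdiff_eq_choose (hAB : A ⊆ B) (hfin : (B \ A).Finite) (k : ℕ) :
    {I ∈ Icc A B | (B \ I).ncard = k}.ncard = (B \ A).ncard.choose k := by
  have hbij := bijOn_sdiff_Icc_powerset hAB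
  calc {I ∈ Icc A B | (B \ I).ncard = k}.ncard
      = ((B \ ·) '' (Icc A B ∩ (B \ ·) ⁻¹' {U | U.ncard = k})).ncard :=
        ((hbij.injOn.mono inter_subset_left).ncard_image).symm
    _ = {U ⊆ B \ A | U.ncard = k}.ncard := by rw [image_inter_preimage, hbij.image_eq]; rfl
    _ = (B \ A).ncard.choose k := ncard_powerset_ncard hfin k

end Set

section NumericalSemigroup

variable {S : Set ℤ} {F : ℤ}

theorem IsFrobOf.unique {I : Set ℤ} {a b : ℤ} (ha : IsFrobOf I a) (hb : IsFrobOf I b) : a = b := by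
  rcases lt_trichotomy a b with h | h | h
  · exact absurd (ha.2 b h) hb.1
  · exact h
  · exact absurd (hb.2 a h) ha.1

theorem pos_of_mem_maxId (hS : IsNumSgrp S) {m : ℤ} (hm : m ∈ maxId S) : 0 < m :=
  lt_of_le_of_ne (hS.2.2.1 m hm.1) (Ne.symm hm.2)

theorem mem_stdK_iff (hF : IsFrobOf S F) {x : ℤ} : x ∈ stdK S F ↔ F - x ∉ S :=
  ⟨And.right, fun h => ⟨by by_contra hx; exact h (hF.2 _ (by omega)), h⟩⟩

theorem frob_notMem_stdK (hS : IsNumSgrp S) : F ∉ stdK S F := fun h => h.2 (by simpa using hS.1)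

theorem add_subset_iff_subset_subI {I J L : Set ℤ} : J + L ⊆ I ↔ L ⊆ subI I J := by
  constructor
  · intro h x hx j hj
    rw [add_comm]
    exact h (add_mem_add hj hx)
  · rintro h _ ⟨j, hj, x, hx, rfl⟩
    show j + x ∈ I
    rw [add_comm]
    exact h hx j hj

theorem maxId_add_stdK_subset (hS : IsNumSgrp S) (hF : IsFrobOf S F) :
    maxId S + stdK S F ⊆ stdK S F := by
  rintro _ ⟨m, hm, k, hk, rfl⟩
  rw [mem_stdK_iff hF] at hk ⊢
  intro h
  have := hS.2.1 _ h _ hm.1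
  rw [show F - (m + k) + m = F - k by ring] at this
  exact hk this

theorem mem_maxId_add_stdK_of_lt (hF : IsFrobOf S F) (hFpos : 0 < F) {z : ℤ}
    (hz : F < z) : z ∈ maxId S + stdK S F :=
  ⟨z, ⟨hF.2 z hz, (hFpos.trans hz).ne'⟩, 0, (mem_stdK_iff hF).2 (by simpa using hF.1), add_zero z⟩

theorem subI_stdK_subset (hS : IsNumSgrp S) (hF : IsFrobOf S F) :
    subI (stdK S F) (maxId S) ⊆ stdK S F ∪ {F} := by
  intro x hx
  by_contra h
  simp only [mem_union, mem_singleton_iff, not_or] at h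
  have hm : F - x ∈ maxId S := ⟨not_not.1 ((mem_stdK_iff hF).not.1 h.1), sub_ne_zero.2 (Ne.symm h.2)⟩
  exact frob_notMem_stdK hS (by simpa using hx _ hm)

theorem subI_maxId_eq_of_mem_Icc (hS : IsNumSgrp S) (hF : IsFrobOf S F) (hFpos : 0 < F)
    {J : Set ℤ} (hJ : J ∈ Icc (maxId S + stdK S F) (stdK S F)) :
    subI J (maxId S) = stdK S F ∪ {F} := by
  refine Subset.antisymm (fun x hx => subI_stdK_subset hS hF fun m hm => hJ.2 (hx m hm))
    (union_subset (add_subset_iff_subset_subI.1 hJ.1) ?_)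
  rintro _ rfl m hm
  exact hJ.1 (mem_maxId_add_stdK_of_lt hF hFpos (by linarith [pos_of_mem_maxId hS hm]))

theorem PF_eq_of_mem_Icc (hS : IsNumSgrp S) (hF : IsFrobOf S F) (hFpos : 0 < F)
    {J : Set ℤ} (hJ : J ∈ Icc (maxId S + stdK S F) (stdK S F)) :
    PF S J = insert F (stdK S F \ J) := by
  rw [PF, subI_maxId_eq_of_mem_Icc hS hF hFpos hJ, union_singleton,
    insert_sdiff_of_notMem _ fun h => frob_notMem_stdK hS (hJ.2 h)]

theorem finite_stdK_sdiff (hF : IsFrobOf S F) (hFpos : 0 < F) :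
    (stdK S F \ (maxId S + stdK S F)).Finite :=
  (finite_Icc 0 F).subset fun _ hx =>
    ⟨hx.1.1, not_lt.1 fun h => hx.2 (mem_maxId_add_stdK_of_lt hF hFpos h)⟩

theorem stdK_sdiff_eq_image_PF (hF : IsFrobOf S F) :
    stdK S F \ (maxId S + stdK S F) = (F - ·) '' PF S S := by
  ext x
  constructor
  · rintro ⟨hxK, hxMK⟩
    refine ⟨F - x, ⟨fun m hm => ?_, (mem_stdK_iff hF).1 hxK⟩, sub_sub_cancel F x⟩
    have : x - m ∉ stdK S F := fun h => hxMK ⟨m, hm, x - m, h, add_sub_cancel m x⟩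
    rw [mem_stdK_iff hF, not_not] at this
    rwa [show F - x + m = F - (x - m) by ring]
  · rintro ⟨f, ⟨hf, hfS⟩, rfl⟩
    refine ⟨(mem_stdK_iff hF).2 (by rwa [sub_sub_cancel]), ?_⟩
    rintro ⟨m, hm, k, hk, hmk⟩
    have := hf m hm
    rw [show f + m = F - k by simp only at hmk; linarith] at this
    exact (mem_stdK_iff hF).1 hk this

theorem ncard_stdK_sdiff (hF : IsFrobOf S F) :
    (stdK S F \ (maxId S + stdK S F)).ncard = (PF S S).ncard := by
  rw [stdK_sdiff_eq_image_PF hF]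
  exact ncard_image_of_injective _ sub_right_injective

theorem ncard_PF_of_mem_Icc (hS : IsNumSgrp S) (hF : IsFrobOf S F) (hFpos : 0 < F)
    {J : Set ℤ} (hJ : J ∈ Icc (maxId S + stdK S F) (stdK S F)) :
    (PF S J).ncard = (stdK S F \ J).ncard + 1 := by
  rw [PF_eq_of_mem_Icc hS hF hFpos hJ, ncard_insert_of_notMem (fun h => frob_notMem_stdK hS h.1)
    ((finite_stdK_sdiff hF hFpos).subset (sdiff_subset_sdiff_right hJ.1))]

theorem tilde_zero (I : Set ℤ) : tilde I 0 = I := by simp [tilde]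

theorem mem_tilde {I : Set ℤ} {d x : ℤ} : x ∈ tilde I d ↔ x - d ∈ I := by
  simp [tilde, sub_eq_add_neg]

theorem ncard_tilde (I : Set ℤ) (d : ℤ) : (tilde I d).ncard = I.ncard :=
  ncard_image_of_injective _ (add_left_injective d)

theorem PF_tilde (S I : Set ℤ) (d : ℤ) : PF S (tilde I d) = tilde (PF S I) d := by
  ext x
  simp only [PF, subI, mem_tilde, mem_sdiff, mem_ofPred_eq, add_sub_right_comm]

theorem isFrobOf_of_mem_Icc (hS : IsNumSgrp S) (hF : IsFrobOf S F) (hFpos : 0 < F)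
    {J : Set ℤ} (hJ : J ∈ Icc (maxId S + stdK S F) (stdK S F)) : IsFrobOf J F :=
  ⟨fun h => frob_notMem_stdK hS (hJ.2 h), fun _ hz => hJ.1 (mem_maxId_add_stdK_of_lt hF hFpos hz)⟩

theorem isRelIdeal_of_mem_Icc (hF : IsFrobOf S F) (hFpos : 0 < F)
    {J : Set ℤ} (hJ : J ∈ Icc (maxId S + stdK S F) (stdK S F)) : IsRelIdeal S J := by
  refine ⟨⟨F + 1, hJ.1 (mem_maxId_add_stdK_of_lt hF hFpos (lt_add_one F))⟩, fun x hx s hs => ?_,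
    F + 1, hF.2 _ (lt_add_one F), fun x hx => hF.2 _ (by linarith [(hJ.2 hx).1])⟩
  by_cases hs0 : s = 0
  · rwa [hs0, add_zero]
  · rw [add_comm]
    exact hJ.1 (add_mem_add ⟨hs, hs0⟩ (hJ.2 hx))

theorem isAlmostCanonical_of_mem_Icc (hS : IsNumSgrp S) (hF : IsFrobOf S F) (hFpos : 0 < F)
    {J : Set ℤ} (hJ : J ∈ Icc (maxId S + stdK S F) (stdK S F)) : IsAlmostCanonical S F J :=
  ⟨F, isFrobOf_of_mem_Icc hS hF hFpos hJ, by
    rw [sub_self, tilde_zero]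
    exact subI_maxId_eq_of_mem_Icc hS hF hFpos hJ⟩

theorem mem_Icc_of_isAlmostCanonical {I : Set ℤ} (hI : IsRelIdeal S I)
    (hAC : IsAlmostCanonical S F I) (hIF : IsFrobOf I F) :
    I ∈ Icc (maxId S + stdK S F) (stdK S F) := by
  obtain ⟨FI, hIFI, hsubI⟩ := hAC
  rw [hIFI.unique hIF, sub_self, tilde_zero] at hsubI
  refine ⟨add_subset_iff_subset_subI.2 (hsubI ▸ subset_union_left), fun x hx => ?_⟩
  have : x ∈ subI I (maxId S) := fun m hm => hI.2.1 x hx m hm.1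
  rw [hsubI] at this
  exact this.resolve_right fun h => hIF.1 (h ▸ hx)

theorem isRelIdeal_and_isAlmostCanonical_and_isFrobOf_iff (hS : IsNumSgrp S) (hF : IsFrobOf S F)
    (hFpos : 0 < F) {I : Set ℤ} :
    (IsRelIdeal S I ∧ IsAlmostCanonical S F I ∧ IsFrobOf I F) ↔
      I ∈ Icc (maxId S + stdK S F) (stdK S F) :=
  ⟨fun ⟨hI, hAC, hIF⟩ => mem_Icc_of_isAlmostCanonical hI hAC hIF, fun hI =>
    ⟨isRelIdeal_of_mem_Icc hF hFpos hI, isAlmostCanonical_of_mem_Icc hS hF hFpos hI,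
      isFrobOf_of_mem_Icc hS hF hFpos hI⟩⟩

theorem ncard_PF_le_of_isAlmostCanonical (hF : IsFrobOf S F) (hFpos : 0 < F)
    {I : Set ℤ} (hAC : IsAlmostCanonical S F I) : (PF S I).ncard ≤ (PF S S).ncard + 1 := by
  obtain ⟨FI, -, hsubI⟩ := hAC
  set J := tilde I (F - FI)
  have hMK : maxId S + stdK S F ⊆ J := add_subset_iff_subset_subI.2 (hsubI ▸ subset_union_left)
  have hPF : PF S J ⊆ insert F (stdK S F \ (maxId S + stdK S F)) := by
    rw [PF, hsubI, union_singleton]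
    rintro x ⟨rfl | hxK, hxJ⟩
    exacts [mem_insert _ _, mem_insert_of_mem _ ⟨hxK, fun h => hxJ (hMK h)⟩]
  calc (PF S I).ncard = (PF S J).ncard := by rw [PF_tilde, ncard_tilde]
    _ ≤ (insert F (stdK S F \ (maxId S + stdK S F))).ncard :=
      ncard_le_ncard hPF ((finite_stdK_sdiff hF hFpos).insert F)
    _ ≤ (stdK S F \ (maxId S + stdK S F)).ncard + 1 := ncard_insert_le _ _
    _ = (PF S S).ncard + 1 := by rw [ncard_stdK_sdiff hF]

end NumericalSemigroup

theorem stmt7 (S : Set ℤ) (hS : IsNumSgrp S) (F : ℤ) (hF : IsFrobOf S F) (hFpos : 0 < F) :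
    (∀ I : Set ℤ, IsRelIdeal S I → IsAlmostCanonical S F I →
        (PF S I).ncard ≤ (PF S S).ncard + 1) ∧
    (∀ i : ℕ, 1 ≤ i → i ≤ (PF S S).ncard + 1 →
        {I : Set ℤ | IsRelIdeal S I ∧ IsAlmostCanonical S F I ∧ IsFrobOf I F ∧
          (PF S I).ncard = i}.ncard = Nat.choose (PF S S).ncard (i - 1)) ∧
    {I : Set ℤ | IsRelIdeal S I ∧ IsAlmostCanonical S F I ∧ IsFrobOf I F}.ncard =
      2 ^ (PF S S).ncard := by
  have hMK := maxId_add_stdK_subset hS hF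
  have hfin := finite_stdK_sdiff hF hFpos
  have hchar : ∀ I, (IsRelIdeal S I ∧ IsAlmostCanonical S F I ∧ IsFrobOf I F) ↔
      I ∈ Icc (maxId S + stdK S F) (stdK S F) := fun I =>
    isRelIdeal_and_isAlmostCanonical_and_isFrobOf_iff hS hF hFpos
  refine ⟨fun I _ => ncard_PF_le_of_isAlmostCanonical hF hFpos, fun i hi _ => ?_, ?_⟩
  · rw [← ncard_stdK_sdiff hF, ← ncard_setOf_mem_Icc_ncard_sdiff_eq_choose hMK hfin]
    congr 1
    ext I
    simp only [mem_ofPred_eq, ← and_assoc, hchar]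
    refine and_congr_right fun hI => ?_
    rw [ncard_PF_of_mem_Icc hS hF hFpos hI]
    omega
  · rw [← ncard_stdK_sdiff hF, ← ncard_Icc_eq_two_pow hMK hfin]
    congr 1
    ext I
    exact hchar I
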